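/- For every finite multiset Γ of ecumenical formulas and every eventually externally classical formula A^ec, the formula (⋀Γ) →c A^ec is provable in the ecumenical sequent calculus LE if and only if (⋀Γ) →i A^ec is provable in LE, where ⋀Γ denotes the conjunction of the formulas in Γ. -/

import Mathlib

namespace Ecumenical

/-! First-order ecumenical language (locally nameless: de Bruijn bound vars,
    named free vars) and the ecumenical sequent calculus LE. -/

inductive Tm where
  | bvar : Nat → Tm
  | fvar : Nat → Tm

/-- Replace the bound variable of index `k` by the free variable `y`. -/
def Tm.openT (k y : Nat) : Tm → Tm
  | .bvar n => if n = k then .fvar y else .bvar n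
  | .fvar n => .fvar n

def Tm.fv : Tm → Finset Nat
  | .bvar _ => ∅
  | .fvar n => {n}

/-- Ecumenical first-order formulas. `ati`/`atc` are intuitionistic/classical
    atomic predicates; quantifiers bind the de Bruijn index 0. -/
inductive Fm where
  | ati : Nat → List Tm → Fm
  | atc : Nat → List Tm → Fm
  | bot : Fm
  | neg : Fm → Fm
  | and : Fm → Fm → Fm
  | ori : Fm → Fm → Fm
  | orc : Fm → Fm → Fm
  | impi : Fm → Fm → Fm
  | impc : Fm → Fm → Fm
  | all : Fm → Fm
  | exi : Fm → Fm
  | exc : Fm → Fm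

def Fm.openF (k y : Nat) : Fm → Fm
  | .ati p ts => .ati p (ts.map (Tm.openT k y))
  | .atc p ts => .atc p (ts.map (Tm.openT k y))
  | .bot => .bot
  | .neg A => .neg (A.openF k y)
  | .and A B => .and (A.openF k y) (B.openF k y)
  | .ori A B => .ori (A.openF k y) (B.openF k y)
  | .orc A B => .orc (A.openF k y) (B.openF k y)
  | .impi A B => .impi (A.openF k y) (B.openF k y)
  | .impc A B => .impc (A.openF k y) (B.openF k y)
  | .all A => .all (A.openF (k+1) y)
  | .exi A => .exi (A.openF (k+1) y)
  | .exc A => .exc (A.openF (k+1) y)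

/-- `A.inst y` is `A[y/x]`: the body of a quantifier instantiated with `y`. -/
def Fm.inst (A : Fm) (y : Nat) : Fm := A.openF 0 y

def Fm.fv : Fm → Finset Nat
  | .ati _ ts => ts.foldr (fun t s => t.fv ∪ s) ∅
  | .atc _ ts => ts.foldr (fun t s => t.fv ∪ s) ∅
  | .bot => ∅
  | .neg A => A.fv
  | .and A B => A.fv ∪ B.fv
  | .ori A B => A.fv ∪ B.fv
  | .orc A B => A.fv ∪ B.fv
  | .impi A B => A.fv ∪ B.fv
  | .impc A B => A.fv ∪ B.fv
  | .all A => A.fv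
  | .exi A => A.fv
  | .exc A => A.fv

/-- `y` is fresh for every formula in the context `Γ`. -/
def FreshIn (y : Nat) (Γ : Multiset Fm) : Prop := ∀ B ∈ Γ, y ∉ B.fv

/-- Intuitionistic bi-implication `A ↔i B`. -/
def Fm.iffi (A B : Fm) : Fm := .and (.impi A B) (.impi B A)

/-- The ecumenical sequent calculus LE, with single-succedent sequents `Γ ⊢ C`. -/
inductive LE : Multiset Fm → Fm → Prop where
  | init (p ts Γ) : LE (Fm.ati p ts ::ₘ Γ) (Fm.ati p ts)
  | botL (Γ A) : LE (Fm.bot ::ₘ Γ) A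
  | cut {Γ A C} : LE Γ A → LE (A ::ₘ Γ) C → LE Γ C
  | wk {Γ} (A) : LE Γ Fm.bot → LE Γ A
  | andL {Γ A B C} : LE (A ::ₘ B ::ₘ Γ) C → LE (Fm.and A B ::ₘ Γ) C
  | andR {Γ A B} : LE Γ A → LE Γ B → LE Γ (Fm.and A B)
  | oriL {Γ A B C} : LE (A ::ₘ Γ) C → LE (B ::ₘ Γ) C → LE (Fm.ori A B ::ₘ Γ) C
  | oriR1 {Γ A} (B) : LE Γ A → LE Γ (Fm.ori A B)
  | oriR2 {Γ B} (A) : LE Γ B → LE Γ (Fm.ori A B)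
  | impiL {Γ A B C} : LE (Fm.impi A B ::ₘ Γ) A → LE (B ::ₘ Γ) C →
      LE (Fm.impi A B ::ₘ Γ) C
  | impiR {Γ A B} : LE (A ::ₘ Γ) B → LE Γ (Fm.impi A B)
  | negL {Γ A} : LE (Fm.neg A ::ₘ Γ) A → LE (Fm.neg A ::ₘ Γ) Fm.bot
  | negR {Γ A} : LE (A ::ₘ Γ) Fm.bot → LE Γ (Fm.neg A)
  | allL {Γ A C} (y) : LE (A.inst y ::ₘ Fm.all A ::ₘ Γ) C → LE (Fm.all A ::ₘ Γ) C
  | allR {Γ A} (y) : y ∉ A.fv → FreshIn y Γ → LE Γ (A.inst y) → LE Γ (Fm.all A)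
  | exiL {Γ A C} (y) : y ∉ A.fv → FreshIn y Γ → y ∉ C.fv →
      LE (A.inst y ::ₘ Γ) C → LE (Fm.exi A ::ₘ Γ) C
  | exiR {Γ A} (y) : LE Γ (A.inst y) → LE Γ (Fm.exi A)
  | orcR {Γ A B} : LE (Fm.neg A ::ₘ Fm.neg B ::ₘ Γ) Fm.bot → LE Γ (Fm.orc A B)
  | impcR {Γ A B} : LE (A ::ₘ Fm.neg B ::ₘ Γ) Fm.bot → LE Γ (Fm.impc A B)
  | excR {Γ A} : LE (Fm.all (Fm.neg A) ::ₘ Γ) Fm.bot → LE Γ (Fm.exc A)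
  | Rc {Γ p ts} : LE (Fm.neg (Fm.ati p ts) ::ₘ Γ) Fm.bot → LE Γ (Fm.atc p ts)
  | orcL {Γ A B} : LE (A ::ₘ Γ) Fm.bot → LE (B ::ₘ Γ) Fm.bot →
      LE (Fm.orc A B ::ₘ Γ) Fm.bot
  | impcL {Γ A B} : LE (Fm.impc A B ::ₘ Γ) A → LE (B ::ₘ Γ) Fm.bot →
      LE (Fm.impc A B ::ₘ Γ) Fm.bot
  | excL {Γ A} (y) : y ∉ A.fv → FreshIn y Γ →
      LE (A.inst y ::ₘ Γ) Fm.bot → LE (Fm.exc A ::ₘ Γ) Fm.bot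
  | Lc {Γ p ts} : LE (Fm.ati p ts ::ₘ Γ) Fm.bot → LE (Fm.atc p ts ::ₘ Γ) Fm.bot


/-- Externally classical formulas: `A^c ::= p_c | ⊥ | A ∨c A | A →c A | ∃c x.A`. -/
inductive IsEC : Fm → Prop where
  | atc (p ts) : IsEC (.atc p ts)
  | bot : IsEC .bot
  | orc (A B) : IsEC (.orc A B)
  | impc (A B) : IsEC (.impc A B)
  | exc (A) : IsEC (.exc A)

/-- Eventually externally classical formulas:
    `A^ec ::= A^c | A^ec ∧ A^ec | ∀x.A^ec | A →i A^ec | ¬A`. -/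
inductive IsEEC : Fm → Prop where
  | ec {A} : IsEC A → IsEEC A
  | and {A B} : IsEEC A → IsEEC B → IsEEC (.and A B)
  | all {A} : IsEEC A → IsEEC (.all A)
  | impi {B} (A) : IsEEC B → IsEEC (.impi A B)
  | neg (A) : IsEEC (.neg A)

/-- The conjunction `⋀Γ` of a finite (listed) multiset of formulas;
    the empty conjunction is the trivially provable `⊥ →i ⊥`. -/
def conj : List Fm → Fm
  | [] => Fm.impi .bot .bot
  | [A] => A
  | A :: l => Fm.and A (conj l)

/-! The direction from `→i` to `→c` holds for arbitrary formulas. For the converse, call `A`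
*stable* when `Γ, ¬A ⊢ ⊥` implies `Γ ⊢ A`. An externally classical formula is stable: its
right rule (`∨cR`, `→cR`, `∃cR`, `Rc`) has a refutation as premise, and its left rule refutes
the formula against that premise (`⊥` is trivial). Stability is preserved by `∧`, `∀` and
`A →i -`, and negations are stable, so every eventually externally classical `A` is stable.
From `⊢ C →c A` the rule `→cL` refutes `C, ¬A`, and stability turns this into `C ⊢ A`.

Both directions need identity on arbitrary formulas and weakening. Weakening is admissible, but
the eigenvariable of `∀R`, `∃iL`, `∃cL` must be moved away from the added formulas, which is
done by permuting the free variables of a whole derivation. -/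

def Tm.rename (π : Equiv.Perm ℕ) : Tm → Tm
  | .bvar n => .bvar n
  | .fvar n => .fvar (π n)

def Fm.rename (π : Equiv.Perm ℕ) : Fm → Fm
  | .ati p ts => .ati p (ts.map (Tm.rename π))
  | .atc p ts => .atc p (ts.map (Tm.rename π))
  | .bot => .bot
  | .neg A => .neg (A.rename π)
  | .and A B => .and (A.rename π) (B.rename π)
  | .ori A B => .ori (A.rename π) (B.rename π)
  | .orc A B => .orc (A.rename π) (B.rename π)
  | .impi A B => .impi (A.rename π) (B.rename π)
  | .impc A B => .impc (A.rename π) (B.rename π)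
  | .all A => .all (A.rename π)
  | .exi A => .exi (A.rename π)
  | .exc A => .exc (A.rename π)

section Rename

variable (π σ : Equiv.Perm ℕ)

lemma Tm.rename_openT (k y : ℕ) (t : Tm) :
    (t.openT k y).rename π = (t.rename π).openT k (π y) := by
  cases t with
  | bvar n => by_cases h : n = k <;> simp [Tm.openT, Tm.rename, h]
  | fvar n => rfl

lemma Fm.rename_openF (A : Fm) (k y : ℕ) :
    (A.openF k y).rename π = (A.rename π).openF k (π y) := by
  induction A generalizing k <;>
    simp [Fm.openF, Fm.rename, Tm.rename_openT, Function.comp_def, *]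

lemma Fm.rename_inst (A : Fm) (y : ℕ) : (A.inst y).rename π = (A.rename π).inst (π y) :=
  A.rename_openF π 0 y

lemma Tm.rename_rename (t : Tm) : (t.rename π).rename σ = t.rename (σ * π) := by
  cases t <;> rfl

lemma Fm.rename_rename (A : Fm) : (A.rename π).rename σ = A.rename (σ * π) := by
  induction A <;> simp [Fm.rename, Tm.rename_rename, Function.comp_def, *]

lemma mem_foldr_fv {x : ℕ} {ts : List Tm} :
    x ∈ ts.foldr (fun t s => t.fv ∪ s) ∅ ↔ ∃ t ∈ ts, x ∈ t.fv := by
  induction ts <;> simp [*]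

lemma Tm.fv_rename (t : Tm) : (t.rename π).fv = t.fv.map π.toEmbedding := by
  cases t <;> simp [Tm.rename, Tm.fv]

lemma Fm.fv_rename (A : Fm) : (A.rename π).fv = A.fv.map π.toEmbedding := by
  induction A with
  | ati _ ts | atc _ ts =>
    induction ts <;> simp_all [Fm.rename, Fm.fv, Tm.fv_rename, Finset.map_union]
  | _ => simp_all [Fm.rename, Fm.fv, Finset.map_union]

lemma Fm.rename_notMem_fv {y : ℕ} {A : Fm} (h : y ∉ A.fv) : π y ∉ (A.rename π).fv := by
  simpa [Fm.fv_rename, Finset.mem_map_equiv] using h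

lemma Tm.rename_eq_self {t : Tm} (h : ∀ x ∈ t.fv, π x = x) : t.rename π = t := by
  cases t <;> simp_all [Tm.rename, Tm.fv]

lemma Fm.rename_eq_self {A : Fm} (h : ∀ x ∈ A.fv, π x = x) : A.rename π = A := by
  induction A with
  | ati _ ts | atc _ ts =>
    simp only [Fm.fv, mem_foldr_fv] at h
    simpa [Fm.rename] using
      List.map_congr_left fun t ht => Tm.rename_eq_self π (h · ⟨t, ht, ·⟩)
  | _ => simp_all [Fm.rename, Fm.fv]

end Rename

@[simp] lemma freshIn_add {y : ℕ} {Δ Γ : Multiset Fm} :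
    FreshIn y (Δ + Γ) ↔ FreshIn y Δ ∧ FreshIn y Γ := by
  simp [FreshIn, or_imp, forall_and]

lemma FreshIn.rename {y : ℕ} {Γ : Multiset Fm} (π : Equiv.Perm ℕ) (h : FreshIn y Γ) :
    FreshIn (π y) (Γ.map (Fm.rename π)) := by
  simpa [FreshIn] using fun B hB => Fm.rename_notMem_fv π (h B hB)

lemma exists_fresh (Γ : Multiset Fm) (s : Finset ℕ) : ∃ y, y ∉ s ∧ FreshIn y Γ := by
  obtain ⟨y, hy⟩ := Infinite.exists_notMem_finset (s ∪ (Γ.map Fm.fv).sup)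
  rw [Finset.mem_union, not_or] at hy
  exact ⟨y, hy.1, fun B hB hyB => hy.2 (Multiset.le_sup (Multiset.mem_map_of_mem Fm.fv hB) hyB)⟩

theorem LE.rename {Γ : Multiset Fm} {C : Fm} (h : LE Γ C) (π : Equiv.Perm ℕ) :
    LE (Γ.map (Fm.rename π)) (C.rename π) := by
  induction h <;> simp only [Multiset.map_cons, Fm.rename, Fm.rename_inst] at *
  case init => exact .init _ _ _
  case botL => exact .botL _ _
  case cut ih₁ ih₂ => exact .cut ih₁ ih₂
  case wk ih => exact .wk _ ih
  case andL ih => exact .andL ih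
  case andR ih₁ ih₂ => exact .andR ih₁ ih₂
  case oriL ih₁ ih₂ => exact .oriL ih₁ ih₂
  case oriR1 ih => exact .oriR1 _ ih
  case oriR2 ih => exact .oriR2 _ ih
  case impiL ih₁ ih₂ => exact .impiL ih₁ ih₂
  case impiR ih => exact .impiR ih
  case negL ih => exact .negL ih
  case negR ih => exact .negR ih
  case allL y _ ih => exact .allL (π y) ih
  case allR y hy hfr _ ih => exact .allR (π y) (Fm.rename_notMem_fv π hy) (hfr.rename π) ih
  case exiL y hy hfr hyC _ ih =>
    exact .exiL (π y) (Fm.rename_notMem_fv π hy) (hfr.rename π) (Fm.rename_notMem_fv π hyC) ih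
  case exiR y _ ih => exact .exiR (π y) ih
  case orcR ih => exact .orcR ih
  case impcR ih => exact .impcR ih
  case excR ih => exact .excR ih
  case Rc ih => exact .Rc ih
  case orcL ih₁ ih₂ => exact .orcL ih₁ ih₂
  case impcL ih₁ ih₂ => exact .impcL ih₁ ih₂
  case excL y hy hfr _ ih => exact .excL (π y) (Fm.rename_notMem_fv π hy) (hfr.rename π) ih
  case Lc ih => exact .Lc ih

lemma Fm.rename_one (A : Fm) : A.rename 1 = A :=
  Fm.rename_eq_self 1 fun _ _ => rfl

lemma Fm.rename_swap_eq_self {y z : ℕ} {A : Fm} (hy : y ∉ A.fv) (hz : z ∉ A.fv) :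
    A.rename (Equiv.swap y z) = A :=
  Fm.rename_eq_self _ fun _ hx =>
    Equiv.swap_apply_of_ne_of_ne (ne_of_mem_of_not_mem hx hy) (ne_of_mem_of_not_mem hx hz)

lemma map_rename_swap_eq_self {y z : ℕ} {Γ : Multiset Fm} (hy : FreshIn y Γ)
    (hz : FreshIn z Γ) :
    Γ.map (Fm.rename (Equiv.swap y z)) = Γ :=
  (Multiset.map_congr rfl fun B hB => Fm.rename_swap_eq_self (hy B hB) (hz B hB)).trans Γ.map_id

lemma map_rename_swap_involutive (y z : ℕ) (Δ : Multiset Fm) :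
    (Δ.map (Fm.rename (Equiv.swap y z))).map (Fm.rename (Equiv.swap y z)) = Δ := by
  simp [Multiset.map_map, Fm.rename_rename, Fm.rename_one]

lemma map_rename_swap_add {y z : ℕ} {Γ : Multiset Fm} (hy : FreshIn y Γ) (hz : FreshIn z Γ)
    (Δ : Multiset Fm) :
    (Δ.map (Fm.rename (Equiv.swap y z)) + Γ).map (Fm.rename (Equiv.swap y z)) = Δ + Γ := by
  rw [Multiset.map_add, map_rename_swap_involutive, map_rename_swap_eq_self hy hz]

theorem LE.add_left {Γ : Multiset Fm} {C : Fm} (h : LE Γ C) (Δ : Multiset Fm) :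
    LE (Δ + Γ) C := by
  induction h generalizing Δ <;> try simp only [Multiset.add_cons] at *
  case init => exact .init _ _ _
  case botL => exact .botL _ _
  case cut ih₁ ih₂ => exact .cut (ih₁ Δ) (ih₂ Δ)
  case wk ih => exact .wk _ (ih Δ)
  case andL ih => exact .andL (ih Δ)
  case andR ih₁ ih₂ => exact .andR (ih₁ Δ) (ih₂ Δ)
  case oriL ih₁ ih₂ => exact .oriL (ih₁ Δ) (ih₂ Δ)
  case oriR1 ih => exact .oriR1 _ (ih Δ)
  case oriR2 ih => exact .oriR2 _ (ih Δ)
  case impiL ih₁ ih₂ => exact .impiL (ih₁ Δ) (ih₂ Δ)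
  case impiR ih => exact .impiR (ih Δ)
  case negL ih => exact .negL (ih Δ)
  case negR ih => exact .negR (ih Δ)
  case allL y _ ih => exact .allL y (ih Δ)
  case allR Γ A y hy hfr _ ih =>
    -- Swap the eigenvariable `y` with a `z` fresh for `Δ` as well: the swap fixes `Γ`,
    -- and `Δ` is swapped in advance so that it comes back unchanged.
    obtain ⟨z, hz, hfrz⟩ := exists_fresh (Δ + Γ) A.fv
    have := (ih (Δ.map (Fm.rename (Equiv.swap y z)))).rename (Equiv.swap y z)
    rw [map_rename_swap_add hfr (freshIn_add.1 hfrz).2, Fm.rename_inst,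
      Fm.rename_swap_eq_self hy hz, Equiv.swap_apply_left] at this
    exact .allR z hz hfrz this
  case exiL Γ A C y hy hfr hyC _ ih =>
    obtain ⟨z, hz, hfrz⟩ := exists_fresh (Δ + Γ) (A.fv ∪ C.fv)
    rw [Finset.mem_union, not_or] at hz
    have := (ih (Δ.map (Fm.rename (Equiv.swap y z)))).rename (Equiv.swap y z)
    rw [Multiset.map_cons, map_rename_swap_add hfr (freshIn_add.1 hfrz).2, Fm.rename_inst,
      Fm.rename_swap_eq_self hy hz.1, Fm.rename_swap_eq_self hyC hz.2,
      Equiv.swap_apply_left] at this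
    exact .exiL z hz.1 hfrz hz.2 this
  case exiR y _ ih => exact .exiR y (ih Δ)
  case orcR ih => exact .orcR (ih Δ)
  case impcR ih => exact .impcR (ih Δ)
  case excR ih => exact .excR (ih Δ)
  case Rc ih => exact .Rc (ih Δ)
  case orcL ih₁ ih₂ => exact .orcL (ih₁ Δ) (ih₂ Δ)
  case impcL ih₁ ih₂ => exact .impcL (ih₁ Δ) (ih₂ Δ)
  case excL Γ A y hy hfr _ ih =>
    obtain ⟨z, hz, hfrz⟩ := exists_fresh (Δ + Γ) A.fv
    have := (ih (Δ.map (Fm.rename (Equiv.swap y z)))).rename (Equiv.swap y z)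
    rw [Multiset.map_cons, map_rename_swap_add hfr (freshIn_add.1 hfrz).2, Fm.rename_inst,
      Fm.rename_swap_eq_self hy hz, Equiv.swap_apply_left] at this
    exact .excL z hz hfrz this
  case Lc ih => exact .Lc (ih Δ)

lemma LE.add_right {Γ : Multiset Fm} {C : Fm} (h : LE Γ C) (Δ : Multiset Fm) : LE (Γ + Δ) C :=
  add_comm Δ Γ ▸ h.add_left Δ

lemma LE.weaken {Γ : Multiset Fm} {C : Fm} (h : LE Γ C) (D : Fm) : LE (D ::ₘ Γ) C := by
  simpa using h.add_left {D}

lemma LE.exch {A B C : Fm} {Γ : Multiset Fm} (h : LE (A ::ₘ B ::ₘ Γ) C) :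
    LE (B ::ₘ A ::ₘ Γ) C :=
  Multiset.cons_swap A B Γ ▸ h

lemma LE.rotate {A B C D : Fm} {Γ : Multiset Fm} (h : LE (C ::ₘ A ::ₘ B ::ₘ Γ) D) :
    LE (A ::ₘ B ::ₘ C ::ₘ Γ) D := by
  rwa [Multiset.cons_swap B C, Multiset.cons_swap A C]

lemma LE.negL_of_mem {A : Fm} {Γ : Multiset Fm} (hA : Fm.neg A ∈ Γ) (h : LE Γ A) :
    LE Γ Fm.bot := by
  obtain ⟨Γ, rfl⟩ := Multiset.exists_cons_of_mem hA
  exact .negL h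

lemma LE.allL_of_mem {A C : Fm} {Γ : Multiset Fm} (hA : Fm.all A ∈ Γ) (y : ℕ)
    (h : LE (A.inst y ::ₘ Γ) C) : LE Γ C := by
  obtain ⟨Γ, rfl⟩ := Multiset.exists_cons_of_mem hA
  exact .allL y h

-- Unlike `sizeOf`, this is invariant under `Fm.inst`.
def Fm.size : Fm → ℕ
  | .ati _ _ | .atc _ _ | .bot => 1
  | .neg A | .all A | .exi A | .exc A => A.size + 1
  | .and A B | .ori A B | .orc A B | .impi A B | .impc A B => A.size + B.size + 1

@[simp] lemma Fm.size_inst (A : Fm) (y : ℕ) : (A.inst y).size = A.size := by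
  suffices ∀ k, (A.openF k y).size = A.size from this 0
  induction A <;> simp [Fm.openF, Fm.size, *]

@[simp] lemma Fm.neg_inst (A : Fm) (y : ℕ) : (Fm.neg A).inst y = Fm.neg (A.inst y) := rfl

theorem LE.ident (A : Fm) (Γ : Multiset Fm) : LE (A ::ₘ Γ) A :=
  match A with
  | .ati p ts => .init p ts Γ
  | .atc p ts => .Rc (.exch (.Lc (.negL_of_mem (A := .ati p ts) (by simp) (.init p ts _))))
  | .bot => .botL Γ _
  | .neg A => .negR (.negL_of_mem (A := A) (by simp) (.ident A _))
  | .and A B => .andL (.andR (.ident A _) (.exch (.ident B _)))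
  | .ori A B => .oriL (.oriR1 B (.ident A _)) (.oriR2 A (.ident B _))
  | .impi A B => .impiR (.exch (.impiL (.exch (.ident A _)) (.ident B _)))
  | .orc A B => .orcR <| .rotate <| .orcL (.negL_of_mem (A := A) (by simp) (.ident A _))
      (.negL_of_mem (A := B) (by simp) (.ident B _))
  | .impc A B => .impcR <| .rotate <|
      .impcL (.exch (.ident A _)) (.negL_of_mem (A := B) (by simp) (.ident B _))
  | .all A =>
    have ⟨y, hy, hfr⟩ := exists_fresh (Fm.all A ::ₘ Γ) A.fv
    .allR y hy hfr (.allL y (.ident (A.inst y) _))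
  | .exi A =>
    have ⟨y, hy, hfr⟩ := exists_fresh Γ A.fv
    .exiL y hy hfr hy (.exiR y (.ident (A.inst y) _))
  | .exc A =>
    have ⟨y, hy, hfr⟩ := exists_fresh (Fm.all (Fm.neg A) ::ₘ Γ) A.fv
    .excR <| .exch <| .excL y hy hfr <| .exch <| .allL y <|
      .negL_of_mem (A := A.inst y) (by simp) (.rotate (.ident (A.inst y) _))
termination_by A.size
decreasing_by all_goals simp only [Fm.size, Fm.size_inst]; omega

lemma LE.of_mem {A : Fm} {Γ : Multiset Fm} (hA : A ∈ Γ) : LE Γ A :=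
  have ⟨Δ, hΓ⟩ := Multiset.exists_cons_of_mem hA
  hΓ ▸ .ident A Δ

lemma LE.add_bot_of_refutes {C : Fm} {Θ Γ : Multiset Fm} (hC : LE (C ::ₘ Θ) .bot)
    (hnC : LE (.neg C ::ₘ Γ) .bot) : LE (Θ + Γ) .bot :=
  .cut (.negR (by simpa only [Multiset.cons_add] using hC.add_right Γ))
    (by simpa only [Multiset.add_cons] using hnC.add_left Θ)

/-- The sequent form of `¬¬A → A`. -/
def Stable (A : Fm) : Prop := ∀ Γ, LE (.neg A ::ₘ Γ) .bot → LE Γ A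

lemma stable_of_refutes {C : Fm} (Θ : Multiset Fm) (hR : ∀ Γ, LE (Θ + Γ) .bot → LE Γ C)
    (hC : LE (C ::ₘ Θ) .bot) : Stable C :=
  fun Γ hnC => hR Γ (.add_bot_of_refutes hC hnC)

lemma stable_atc (p : ℕ) (ts : List Tm) : Stable (.atc p ts) :=
  stable_of_refutes (.neg (.ati p ts) ::ₘ 0) (fun _ h => .Rc (by simpa using h))
    (.Lc (.negL_of_mem (A := .ati p ts) (by simp) (.ident _ _)))

lemma stable_bot : Stable .bot :=
  stable_of_refutes 0 (fun _ h => by simpa using h) (.botL 0 _)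

lemma stable_orc (A B : Fm) : Stable (.orc A B) :=
  stable_of_refutes (.neg A ::ₘ .neg B ::ₘ 0) (fun _ h => .orcR (by simpa using h))
    (.orcL (.negL_of_mem (A := A) (by simp) (.ident A _))
      (.negL_of_mem (A := B) (by simp) (.ident B _)))

lemma stable_impc (A B : Fm) : Stable (.impc A B) :=
  stable_of_refutes (A ::ₘ .neg B ::ₘ 0) (fun _ h => .impcR (by simpa using h))
    (.impcL (.of_mem (by simp)) (.negL_of_mem (A := B) (by simp) (.ident B _)))

lemma stable_exc (A : Fm) : Stable (.exc A) := by
  obtain ⟨y, hy, hfr⟩ := exists_fresh (.all (.neg A) ::ₘ 0) A.fv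
  refine stable_of_refutes (.all (.neg A) ::ₘ 0) (fun _ h => .excR (by simpa using h)) ?_
  refine .excL y hy hfr ?_
  exact .allL_of_mem (A := .neg A) (by simp) y
    (.negL_of_mem (A := A.inst y) (by simp) (.of_mem (by simp)))

lemma IsEC.stable {A : Fm} : IsEC A → Stable A
  | .atc p ts => stable_atc p ts
  | .bot => stable_bot
  | .orc A B => stable_orc A B
  | .impc A B => stable_impc A B
  | .exc A => stable_exc A

lemma Stable.and {A B : Fm} (hA : Stable A) (hB : Stable B) : Stable (.and A B) := fun Γ H =>
  .andR
    (hA Γ (by simpa using (LE.add_bot_of_refutes (Θ := .neg A ::ₘ 0)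
      (.andL (.negL_of_mem (A := A) (by simp) (.ident A _))) H)))
    (hB Γ (by simpa using (LE.add_bot_of_refutes (Θ := .neg B ::ₘ 0)
      (.andL (.negL_of_mem (A := B) (by simp) (.of_mem (by simp)))) H)))

lemma Stable.all {A : Fm} (hA : ∀ y, Stable (A.inst y)) : Stable (.all A) := fun Γ H =>
  have ⟨y, hy, hfr⟩ := exists_fresh Γ A.fv
  .allR y hy hfr <| hA y Γ <| by
    simpa using LE.add_bot_of_refutes (Θ := .neg (A.inst y) ::ₘ 0)
      (.allL y (.negL_of_mem (A := A.inst y) (by simp) (.ident _ _))) H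

lemma Stable.impi (A : Fm) {B : Fm} (hB : Stable B) : Stable (.impi A B) := fun Γ H =>
  .impiR <| hB _ <| by
    simpa using LE.add_bot_of_refutes (Θ := .neg B ::ₘ A ::ₘ 0)
      (.impiL (.of_mem (by simp)) (.negL_of_mem (A := B) (by simp) (.ident B _))) H

lemma stable_neg (A : Fm) : Stable (.neg A) := fun Γ H =>
  .negR <| by simpa using LE.add_bot_of_refutes (Θ := A ::ₘ 0) (.negL (.of_mem (by simp))) H

lemma IsEEC.openF {A : Fm} (h : IsEEC A) (k y : ℕ) : IsEEC (A.openF k y) := by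
  induction h generalizing k with
  | ec h => cases h <;> exact .ec (by constructor)
  | and _ _ ih₁ ih₂ => exact .and (ih₁ k) (ih₂ k)
  | all _ ih => exact .all (ih (k + 1))
  | impi A _ ih => exact .impi _ (ih k)
  | neg A => exact .neg _

lemma IsEEC.inst {A : Fm} (h : IsEEC A) (y : ℕ) : IsEEC (A.inst y) :=
  h.openF 0 y

theorem IsEEC.stable {A : Fm} (hA : IsEEC A) : Stable A :=
  match A, hA with
  | _, .ec h => h.stable
  | _, .and hA hB => hA.stable.and hB.stable
  | .all A, .all hA => Stable.all fun y => (hA.inst y).stable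
  | _, .impi A hB => hB.stable.impi A
  | _, .neg A => stable_neg A
termination_by A.size
decreasing_by all_goals simp only [Fm.size, Fm.size_inst]; omega

lemma LE.impc_of_impi {Γ : Multiset Fm} {A B : Fm} (h : LE Γ (.impi A B)) : LE Γ (.impc A B) :=
  .impcR <| .cut ((h.weaken _).weaken _) <|
    .impiL (.of_mem (by simp)) (.negL_of_mem (A := B) (by simp) (.ident B _))

lemma LE.impi_of_impc {Γ : Multiset Fm} {A B : Fm} (h : LE Γ (.impc A B)) (hB : Stable B) :
    LE Γ (.impi A B) :=
  .impiR <| hB _ <| .cut ((h.weaken _).weaken _) <|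
    .impcL (.of_mem (by simp)) (.negL_of_mem (A := B) (by simp) (.ident B _))

/-- For every finite multiset Γ (given by a list `L`) and eventually
    externally classical A, `⊢_LE ⋀Γ →c A` iff `⊢_LE ⋀Γ →i A`. -/
theorem LE_classical_right_eec (L : List Fm) (A : Fm) (hA : IsEEC A) :
    LE 0 (Fm.impc (conj L) A) ↔ LE 0 (Fm.impi (conj L) A) :=
  ⟨fun h => h.impi_of_impc hA.stable, LE.impc_of_impi⟩

end Ecumenical
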